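/- arXiv:1011.6626 — 7 statements merged into one kernel-verified Lean document; each statement's English description precedes it below -/
import Mathlib

section
/- The set of sequences f : ℕ → ℕ containing infinitely many zeroes (i.e., {f : ∀ m, ∃ n > m, f(n) = 0}) is not guessable. -/
open Filter Set
open scoped Classical

/-- The initial segment `(f 0, ..., f n)` of an infinite sequence. -/
def seg (f : ℕ → ℕ) (n : ℕ) : List ℕ := List.ofFn fun i : Fin (n + 1) => f i

/-- `G` guesses `S`: for every `f` eventually `G (f 0, ..., f n)` is 1 if `f ∈ S`, else 0. -/
def Guesses (G : List ℕ → Fin 2) (S : Set (ℕ → ℕ)) : Prop :=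
  ∀ f : ℕ → ℕ, ∃ m, ∀ n, n > m → G (seg f n) = if f ∈ S then 1 else 0

/-- `S` is guessable if some `G` guesses it. -/
def Guessable (S : Set (ℕ → ℕ)) : Prop := ∃ G, Guesses G S

/-- An infinite sequence extends a finite sequence. -/
def ExtendsSeq (h : ℕ → ℕ) (g : List ℕ) : Prop :=
  ∀ i, (hi : i < g.length) → h i = g.get ⟨i, hi⟩

/-- `S` is overguessable. -/
def Overguessable (S : Set (ℕ → ℕ)) : Prop :=
  ∃ μ : List ℕ → ℕ∞,
    (∀ f ∈ S, ∃ B : ℕ, ∀ᶠ n in atTop, μ (seg f n) ≤ (B : ℕ∞)) ∧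
    (∀ f ∉ S, ∀ B : ℕ, ∀ᶠ n in atTop, (B : ℕ∞) < μ (seg f n))

/-!
Diagonalize against a would-be guesser `G`: build `f` whose next value is `1` exactly when `G`
currently guesses "infinitely many zeroes". If `G` eventually says yes, `f` is eventually `1`;
if `G` eventually says no, `f` is eventually `0`. Either way `G` is wrong about `f`.
-/

def antiGuess (G : List ℕ → Fin 2) : ℕ → ℕ
  | 0 => 0
  | n + 1 => if G (List.ofFn fun i : Fin (n + 1) => antiGuess G i) = 1 then 1 else 0
decreasing_by exact i.isLt

lemma antiGuess_succ (G : List ℕ → Fin 2) (n : ℕ) :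
    antiGuess G (n + 1) = if G (seg (antiGuess G) n) = 1 then 1 else 0 := by
  rw [antiGuess, seg]

theorem stmt3 : ¬ Guessable {f : ℕ → ℕ | ∀ m, ∃ n > m, f n = 0} := by
  rintro ⟨G, hG⟩
  obtain ⟨m, hm⟩ := hG (antiGuess G)
  split_ifs at hm with hzeros
  · obtain ⟨_ | n, hn, hzero⟩ := hzeros (m + 1)
    · omega
    · simp [antiGuess_succ, hm n (by omega)] at hzero
  · refine hzeros fun k => ⟨max k m + 2, by omega, ?_⟩
    simp [antiGuess_succ, hm (max k m + 1) (by omega)]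
end

section
/- The set of surjective sequences f : ℕ → ℕ (i.e., {f : ∀ m, ∃ n, f(n) = m}) is not guessable. -/
open Filter Set
open scoped Classical

/- Auxiliary machinery for the diagonalization. -/

lemma length_seg (f : ℕ → ℕ) (n : ℕ) : (seg f n).length = n + 1 := by
  simp [seg]

lemma getElem_seg (f : ℕ → ℕ) (n i : ℕ) (h : i < (seg f n).length) :
    (seg f n)[i] = f i := by
  simp only [seg, List.getElem_ofFn]

/-- A finite list padded with zeros. -/
def padded (σ : List ℕ) : ℕ → ℕ := fun n => σ.getD n 0

lemma le_foldr_max {x : ℕ} : ∀ {l : List ℕ}, x ∈ l → x ≤ l.foldr max 0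
  | a :: t, h => by
    rcases List.mem_cons.1 h with rfl | h
    · exact le_max_left _ _
    · exact le_trans (le_foldr_max h) (le_max_right _ _)

lemma padded_not_surj (σ : List ℕ) : ¬ Function.Surjective (padded σ) := by
  intro h
  obtain ⟨n, hn⟩ := h (σ.foldr max 0 + 1)
  have hle : padded σ n ≤ σ.foldr max 0 := by
    unfold padded
    by_cases hl : n < σ.length
    · rw [List.getD_eq_getElem _ _ hl]
      exact le_foldr_max (List.getElem_mem _)
    · rw [List.getD_eq_default _ _ (not_lt.1 hl)]
      exact Nat.zero_le _
  omega

section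
variable (G : List ℕ → Fin 2) (hG : Guesses G {f : ℕ → ℕ | Function.Surjective f})

/-- A stage beyond which `G` answers 0 on the zero-padded extension of `σ`. -/
noncomputable def nxt (σ : List ℕ) : ℕ :=
  max ((hG (padded σ)).choose + 1) σ.length

noncomputable def stp (σ : List ℕ) (k : ℕ) : List ℕ :=
  seg (padded σ) (nxt G hG σ) ++ [k]

noncomputable def build : ℕ → List ℕ
  | 0 => []
  | k + 1 => stp G hG (build k) k

lemma G_tau_zero (σ : List ℕ) : G (seg (padded σ) (nxt G hG σ)) = 0 := by
  have h := (hG (padded σ)).choose_spec (nxt G hG σ)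
    (lt_of_lt_of_le (Nat.lt_succ_self _) (le_max_left _ _))
  simpa [padded_not_surj σ] using h

lemma prefix_seg_padded (σ : List ℕ) (n : ℕ) (h : σ.length ≤ n + 1) :
    σ <+: seg (padded σ) n := by
  rw [List.prefix_iff_eq_take]
  apply List.ext_getElem
  · simp [length_seg]; omega
  · intro i h1 h2
    rw [List.getElem_take, getElem_seg]
    have : i < σ.length := h1
    simp [padded, List.getElem?_eq_getElem this]

lemma build_prefix_succ (k : ℕ) : build G hG k <+: build G hG (k + 1) := by
  show build G hG k <+: stp G hG (build G hG k) k
  unfold stp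
  exact (prefix_seg_padded _ _ (le_trans (le_max_right _ _) (Nat.le_succ _))).trans
    (List.prefix_append _ _)

lemma build_prefix {j k : ℕ} (h : j ≤ k) : build G hG j <+: build G hG k := by
  induction k with
  | zero => simp [Nat.le_zero.1 h]
  | succ k ih =>
    rcases Nat.lt_succ_iff_lt_or_eq.1 (Nat.lt_succ_of_le h) with h' | rfl
    · exact (ih (Nat.lt_succ_iff.1 h')).trans (build_prefix_succ G hG k)
    · exact List.prefix_refl _

lemma length_build (k : ℕ) : k ≤ (build G hG k).length := by
  induction k with
  | zero => simp
  | succ k ih =>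
    have h : (build G hG k).length ≤ nxt G hG (build G hG k) := le_max_right _ _
    show k + 1 ≤ (stp G hG (build G hG k) k).length
    unfold stp
    rw [List.length_append, length_seg]
    simp
    omega

/-- The diagonal sequence: the limit of the `build` lists. -/
noncomputable def dseq : ℕ → ℕ := fun n => padded (build G hG (n + 1)) n

lemma dseq_eq (M i : ℕ) (h : i < (build G hG M).length) :
    dseq G hG i = (build G hG M)[i] := by
  rcases le_total (i + 1) M with hle | hle
  · have hp := build_prefix G hG hle
    have hi : i < (build G hG (i + 1)).length :=
      lt_of_lt_of_le (Nat.lt_succ_self i) (length_build G hG (i + 1))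
    rw [show dseq G hG i = (build G hG (i + 1))[i] from by
      simp [dseq, padded, List.getElem?_eq_getElem hi]]
    exact List.IsPrefix.getElem hp hi
  · have hp := build_prefix G hG hle
    have hi : i < (build G hG (i + 1)).length := lt_of_lt_of_le h hp.length_le
    rw [show dseq G hG i = (build G hG (i + 1))[i] from by
      simp [dseq, padded, List.getElem?_eq_getElem hi]]
    exact (List.IsPrefix.getElem hp h).symm

lemma dseq_surj : Function.Surjective (dseq G hG) := by
  intro k
  set τ := seg (padded (build G hG k)) (nxt G hG (build G hG k)) with hτ
  have hb : build G hG (k + 1) = τ ++ [k] := rfl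
  refine ⟨τ.length, ?_⟩
  have hlen : τ.length < (build G hG (k + 1)).length := by
    rw [hb, List.length_append]; simp
  rw [dseq_eq G hG (k + 1) τ.length hlen]
  simp [hb]

lemma seg_dseq (k : ℕ) :
    seg (dseq G hG) (nxt G hG (build G hG k)) =
      seg (padded (build G hG k)) (nxt G hG (build G hG k)) := by
  set τ := seg (padded (build G hG k)) (nxt G hG (build G hG k)) with hτ
  have hb : build G hG (k + 1) = τ ++ [k] := rfl
  have hpre : τ <+: build G hG (k + 1) := ⟨[k], hb.symm⟩
  apply List.ext_getElem
  · simp [hτ, length_seg]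
  · intro i h1 h2
    rw [getElem_seg]
    have hi : i < (build G hG (k + 1)).length := lt_of_lt_of_le h2 hpre.length_le
    rw [dseq_eq G hG (k + 1) i hi]
    exact (List.IsPrefix.getElem hpre h2).symm

end

theorem stmt4 : ¬ Guessable {f : ℕ → ℕ | Function.Surjective f} := by
  rintro ⟨G, hG⟩
  obtain ⟨m, hm⟩ := hG (dseq G hG)
  set k := m + 1 with hk
  set N := nxt G hG (build G hG k) with hN
  have hNm : m < N := by
    have h1 : (build G hG k).length ≤ N := le_max_right _ _
    have h2 := length_build G hG k
    omega
  have h1 := hm N hNm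
  rw [seg_dseq G hG k, G_tau_zero G hG] at h1
  simp [dseq_surj G hG] at h1
end

section
/- The set of bijective sequences f : ℕ → ℕ (permutations of ℕ) is not guessable. -/
open Filter Set
open scoped Classical

lemma seg_congr {f g : ℕ → ℕ} {n : ℕ} (h : ∀ i ≤ n, f i = g i) : seg f n = seg g n := by
  simp only [seg]
  exact congrArg List.ofFn (funext fun i => h i (Nat.lt_succ_iff.mp i.isLt))

lemma cycle_bij (p N : ℕ) (hpN : p ≤ N) :
    Function.Bijective (fun i => if i < p then i else if i ≤ N then i + 1 else
      if i = N + 1 then p else i) := by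
  rw [Function.bijective_iff_has_inverse]
  refine ⟨fun i => if i < p then i else if i = p then N + 1 else if i ≤ N + 1 then i - 1 else i,
    fun i => ?_, fun i => ?_⟩ <;> simp only [] <;> split_ifs <;> omega

lemma key (G : List ℕ → Fin 2) (hG : Guesses G {f : ℕ → ℕ | Function.Bijective f})
    (f : ℕ → ℕ) (hf : Function.Bijective f) (n k : ℕ) :
    ∃ q : (ℕ → ℕ) × ℕ, Function.Bijective q.1 ∧ n < q.2 ∧ (∀ i ≤ n, q.1 i = f i) ∧
      (∃ i ≤ q.2, q.1 i = k) ∧ G (seg q.1 q.2) = 0 := by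
  obtain ⟨j, hj⟩ := hf.2 k
  obtain ⟨p, hpn, hpj⟩ : ∃ p, n < p ∧ p ≠ j := by
    rcases eq_or_ne j (n + 1) with h | h
    · exact ⟨n + 2, by omega, by omega⟩
    · exact ⟨n + 1, by omega, by omega⟩
  set g : ℕ → ℕ := fun i => if i < p then f i else f (i + 1) with hg
  have hgS : g ∉ {f : ℕ → ℕ | Function.Bijective f} := by
    intro hgb
    obtain ⟨i, hi⟩ := hgb.2 (f p)
    simp only [hg] at hi
    split_ifs at hi with h
    · exact absurd (hf.1 hi) (by omega)
    · exact absurd (hf.1 hi) (by omega)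
  obtain ⟨m, hm⟩ := hG g
  have hm0 : ∀ n' > m, G (seg g n') = 0 := by
    intro n' hn'
    rw [hm n' hn', if_neg hgS]
  obtain ⟨j', hj'⟩ : ∃ j', g j' = k := by
    rcases lt_or_gt_of_ne hpj.symm with h | h
    · exact ⟨j, by simp only [hg, if_pos h, hj]⟩
    · refine ⟨j - 1, ?_⟩
      simp only [hg, if_neg (by omega : ¬ j - 1 < p)]
      rw [show j - 1 + 1 = j by omega, hj]
  set n' : ℕ := max m (max p j') + 1 with hn'
  have hpN : p ≤ n' := by omega
  set σ : ℕ → ℕ := fun i => if i < p then i else if i ≤ n' then i + 1 else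
      if i = n' + 1 then p else i with hσ
  have hσbij : Function.Bijective σ := cycle_bij p n' hpN
  have hfg : ∀ i ≤ n', (f ∘ σ) i = g i := by
    intro i hi
    simp only [Function.comp, hσ, hg]
    split_ifs with h1 h2 <;> first | rfl | omega
  refine ⟨(f ∘ σ, n'), hf.comp hσbij, by omega, ?_, ⟨j', by omega, ?_⟩, ?_⟩
  · intro i hi
    show (f ∘ σ) i = f i
    rw [hfg i (by omega)]
    simp only [hg, if_pos (by omega : i < p)]
  · show (f ∘ σ) j' = k
    rw [hfg j' (by omega), hj']
  · show G (seg (f ∘ σ) n') = 0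
    rw [seg_congr (fun i hi => hfg i hi), hm0 n' (by omega)]

noncomputable def FF (G : List ℕ → Fin 2) (hG : Guesses G {f : ℕ → ℕ | Function.Bijective f}) :
    ℕ → {q : (ℕ → ℕ) × ℕ // Function.Bijective q.1}
  | 0 => ⟨(id, 0), Function.bijective_id⟩
  | k + 1 =>
    ⟨(key G hG (FF G hG k).1.1 (FF G hG k).2 (FF G hG k).1.2 k).choose,
     (key G hG (FF G hG k).1.1 (FF G hG k).2 (FF G hG k).1.2 k).choose_spec.1⟩

lemma FF_spec (G : List ℕ → Fin 2) (hG : Guesses G {f : ℕ → ℕ | Function.Bijective f}) (k : ℕ) :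
    (FF G hG k).1.2 < (FF G hG (k+1)).1.2 ∧
    (∀ i ≤ (FF G hG k).1.2, (FF G hG (k+1)).1.1 i = (FF G hG k).1.1 i) ∧
    (∃ i ≤ (FF G hG (k+1)).1.2, (FF G hG (k+1)).1.1 i = k) ∧
    G (seg (FF G hG (k+1)).1.1 (FF G hG (k+1)).1.2) = 0 := by
  have h := (key G hG (FF G hG k).1.1 (FF G hG k).2 (FF G hG k).1.2 k).choose_spec
  exact ⟨h.2.1, h.2.2.1, h.2.2.2.1, h.2.2.2.2⟩

theorem stmt5 : ¬ Guessable {f : ℕ → ℕ | Function.Bijective f} := by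
  rintro ⟨G, hG⟩
  have mono : ∀ k l, k ≤ l → (FF G hG k).1.2 ≤ (FF G hG l).1.2 := by
    intro k l hkl
    induction l, hkl using Nat.le_induction with
    | base => exact le_rfl
    | succ l hl ih => exact ih.trans (FF_spec G hG l).1.le
  have nk_ge : ∀ k, k ≤ (FF G hG k).1.2 := by
    intro k
    induction k with
    | zero => exact Nat.zero_le _
    | succ k ih => exact Nat.succ_le_of_lt (lt_of_le_of_lt ih (FF_spec G hG k).1)
  have agree : ∀ k l, k ≤ l → ∀ i ≤ (FF G hG k).1.2,
      (FF G hG l).1.1 i = (FF G hG k).1.1 i := by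
    intro k l hkl
    induction l, hkl using Nat.le_induction with
    | base => intro i _; rfl
    | succ l hl ih =>
      intro i hi
      rw [(FF_spec G hG l).2.1 i (hi.trans (mono k l hl)), ih i hi]
  have flim_eq : ∀ k i, i ≤ (FF G hG k).1.2 →
      (FF G hG i).1.1 i = (FF G hG k).1.1 i := by
    intro k i hi
    have h1 := agree k (max k i) (le_max_left _ _) i hi
    have h2 := agree i (max k i) (le_max_right _ _) i (nk_ge i)
    exact h2.symm.trans h1
  have hbij : Function.Bijective (fun i => (FF G hG i).1.1 i) := by
    constructor
    · intro a b hab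
      simp only at hab
      rw [flim_eq (max a b) a ((le_max_left a b).trans (nk_ge _)),
          flim_eq (max a b) b ((le_max_right a b).trans (nk_ge _))] at hab
      exact (FF G hG (max a b)).2.1 hab
    · intro v
      obtain ⟨i, hi, hiv⟩ := (FF_spec G hG v).2.2.1
      exact ⟨i, (flim_eq (v+1) i hi).trans hiv⟩
  obtain ⟨m, hm⟩ := hG (fun i => (FF G hG i).1.1 i)
  have hmem : (fun i => (FF G hG i).1.1 i) ∈ {f : ℕ → ℕ | Function.Bijective f} := hbij
  have h1 : G (seg (fun i => (FF G hG i).1.1 i) ((FF G hG (m+1)).1.2)) = 1 := by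
    rw [hm _ (lt_of_lt_of_le (Nat.lt_succ_self m) (nk_ge (m+1))), if_pos hmem]
  have h0 : G (seg (fun i => (FF G hG i).1.1 i) ((FF G hG (m+1)).1.2)) = 0 := by
    rw [seg_congr (fun i hi => flim_eq (m+1) i hi)]
    exact (FF_spec G hG m).2.2.2
  rw [h1] at h0
  exact absurd h0 (by decide)
end

section
/- Every countable subset S ⊆ ℕ^ℕ is overguessable. -/
open Filter Set
open scoped Classical

/-! A countable `S` is enumerated by a code `ι : (ℕ → ℕ) → ℕ` injective on `S`. Let `μ s` be the least
code of a member of `S` extending `s`. Along `f ∈ S` this is at most `ι f`. For `f ∉ S` and any `B`,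
only finitely many members of `S` have code `≤ B`, each differs from `f` somewhere, so beyond all
those places none of them extends `(f 0, ..., f n)` and `μ` exceeds `B`. -/

theorem extendsSeq_seg_iff {g f : ℕ → ℕ} {n : ℕ} : ExtendsSeq g (seg f n) ↔ ∀ i ≤ n, g i = f i := by
  simp only [ExtendsSeq, seg, List.length_ofFn, List.get_ofFn, Nat.lt_succ_iff]
  rfl

theorem eventually_not_extendsSeq_seg {g f : ℕ → ℕ} (hgf : g ≠ f) :
    ∀ᶠ n in atTop, ¬ ExtendsSeq g (seg f n) := by
  obtain ⟨i, hi⟩ := Function.ne_iff.1 hgf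
  filter_upwards [eventually_ge_atTop i] with n hn
  exact fun hext => hi (extendsSeq_seg_iff.1 hext i hn)

/-- `⊤` when no member of `S` extends `s`. -/
noncomputable def leastCode (S : Set (ℕ → ℕ)) (ι : (ℕ → ℕ) → ℕ) (s : List ℕ) : ℕ∞ :=
  ⨅ g ∈ S, ⨅ (_ : ExtendsSeq g s), (ι g : ℕ∞)

theorem leastCode_seg_le {S : Set (ℕ → ℕ)} (ι : (ℕ → ℕ) → ℕ) {f : ℕ → ℕ} (hf : f ∈ S) (n : ℕ) :
    leastCode S ι (seg f n) ≤ ι f :=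
  (biInf_le _ hf).trans (iInf_le _ (extendsSeq_seg_iff.2 fun _ _ => rfl))

theorem eventually_lt_leastCode_seg {S : Set (ℕ → ℕ)} {ι : (ℕ → ℕ) → ℕ} (hι : InjOn ι S)
    {f : ℕ → ℕ} (hf : f ∉ S) (B : ℕ) : ∀ᶠ n in atTop, (B : ℕ∞) < leastCode S ι (seg f n) := by
  set T := S ∩ ι ⁻¹' Iic B
  have hT : T.Finite :=
    ((finite_Iic B).subset (image_subset_iff.2 inter_subset_right)).of_finite_image
      (hι.mono inter_subset_left)
  have hsep : ∀ᶠ n in atTop, ∀ g ∈ T, ¬ ExtendsSeq g (seg f n) :=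
    (eventually_all_finite hT).2 fun g hg =>
      eventually_not_extendsSeq_seg fun hgf => hf (hgf ▸ hg.1)
  filter_upwards [hsep] with n hn
  rw [← ENat.add_one_le_iff (ENat.natCast_ne_top B)]
  refine le_iInf₂ fun g hg => le_iInf fun hext => ?_
  have hB : B < ι g := not_le.1 fun hle => hn g ⟨hg, hle⟩ hext
  exact_mod_cast hB

theorem stmt8 (S : Set (ℕ → ℕ)) (h : S.Countable) : Overguessable S := by
  obtain ⟨ι, hι⟩ := countable_iff_exists_injOn.1 h
  exact ⟨leastCode S ι, fun f hf => ⟨ι f, .of_forall (leastCode_seg_le ι hf)⟩,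
    fun f hf B => eventually_lt_leastCode_seg hι hf B⟩
end

section
/- If both S ⊆ ℕ^ℕ and its complement are overguessable, then S is guessable. -/
open Filter Set
open scoped Classical

theorem stmt9 (S : Set (ℕ → ℕ)) (h1 : Overguessable S) (h2 : Overguessable Sᶜ) :
    Guessable S := by
  obtain ⟨μ, hμ1, hμ2⟩ := h1
  obtain ⟨ν, hν1, hν2⟩ := h2
  refine ⟨fun s => if μ s < ν s then 1 else 0, fun f => ?_⟩
  by_cases hf : f ∈ S
  · obtain ⟨B, hB⟩ := hμ1 f hf
    have hν := hν2 f (by simpa using hf) B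
    obtain ⟨m, hm⟩ := (hB.and hν).exists_forall_of_atTop
    refine ⟨m, fun n hn => ?_⟩
    obtain ⟨hb, hv⟩ := hm n hn.le
    simp [hf, lt_of_le_of_lt hb hv]
  · obtain ⟨B, hB⟩ := hν1 f hf
    have hμ := hμ2 f hf B
    obtain ⟨m, hm⟩ := (hB.and hμ).exists_forall_of_atTop
    refine ⟨m, fun n hn => ?_⟩
    obtain ⟨hb, hv⟩ := hm n hn.le
    simp [hf, not_lt.mpr (le_of_lt (lt_of_le_of_lt hb hv))]
end

section
/- The set of sequences f : ℕ → ℕ taking values in {0,...,9} which take the value 5 infinitely often is not guessable. -/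
open Filter Set
open scoped Classical

/-- Auxiliary chain of finite segments forcing `G` to alternate. -/
noncomputable def chainAux (G : List ℕ → Fin 2)
    (H : ∀ s : List ℕ, (∀ x ∈ s, x ≤ 9) → ∀ b : Fin 2,
      ∃ t : List ℕ, s <+: t ∧ (∀ x ∈ t, x ≤ 9) ∧ s.length < t.length ∧ G t = b) :
    ℕ → {l : List ℕ // ∀ x ∈ l, x ≤ 9}
  | 0 => ⟨[0], by simp⟩
  | k + 1 =>
    ⟨(H (chainAux G H k).1 (chainAux G H k).2 (if Even k then 1 else 0)).choose,
      (H (chainAux G H k).1 (chainAux G H k).2 (if Even k then 1 else 0)).choose_spec.2.1⟩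

theorem stmt12 :
    ¬ Guessable {f : ℕ → ℕ | (∀ n, f n ≤ 9) ∧ ∀ m, ∃ n > m, f n = 5} := by
  set S : Set (ℕ → ℕ) := {f : ℕ → ℕ | (∀ n, f n ≤ 9) ∧ ∀ m, ∃ n > m, f n = 5} with hS
  rintro ⟨G, hG⟩
  -- key extension lemma
  have H : ∀ s : List ℕ, (∀ x ∈ s, x ≤ 9) → ∀ b : Fin 2,
      ∃ t : List ℕ, s <+: t ∧ (∀ x ∈ t, x ≤ 9) ∧ s.length < t.length ∧ G t = b := by
    intro s hs b
    set v : ℕ := if b = 1 then 5 else 0 with hv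
    set g : ℕ → ℕ := fun n => if h : n < s.length then s[n] else v with hgdef
    have hv9 : v ≤ 9 := by rw [hv]; split <;> norm_num
    have hg9 : ∀ n, g n ≤ 9 := by
      intro n; rw [hgdef]; dsimp only; split
      · exact hs _ (List.getElem_mem _)
      · exact hv9
    have hgS : (if g ∈ S then (1 : Fin 2) else 0) = b := by
      by_cases hb : b = 1
      · have hgmem : g ∈ S := by
          refine ⟨hg9, fun m => ⟨max m s.length + 1, by omega, ?_⟩⟩
          rw [hgdef]; dsimp only
          rw [dif_neg (by omega), hv, if_pos hb]
        rw [if_pos hgmem, hb]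
      · have hb0 : b = 0 := by omega
        have hgmem : g ∉ S := by
          rintro ⟨-, h5⟩
          obtain ⟨n, hn, hn5⟩ := h5 s.length
          rw [hgdef] at hn5; dsimp only at hn5
          rw [dif_neg (by omega), hv, if_neg hb] at hn5
          exact absurd hn5 (by norm_num)
        rw [if_neg hgmem, hb0]
    obtain ⟨m, hm⟩ := hG g
    set n := max m s.length + 1 with hn
    refine ⟨seg g n, ?_, ?_, ?_, ?_⟩
    · rw [List.prefix_iff_eq_take]
      apply List.ext_getElem
      · simp [seg]; omega
      · intro i hi₁ hi₂
        have hi : i < s.length := hi₁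
        simp only [seg, List.getElem_take, List.getElem_ofFn]
        rw [hgdef]; dsimp only; rw [dif_pos hi]
    · intro x hx
      simp only [seg, List.mem_ofFn] at hx
      obtain ⟨i, rfl⟩ := hx
      exact hg9 _
    · simp [seg]; omega
    · rw [hm n (by omega)]; convert hgS using 2
  -- the chain
  set T := chainAux G H with hT
  have hstep : ∀ k, (T k).1 <+: (T (k + 1)).1 ∧ (T k).1.length < (T (k + 1)).1.length ∧
      G (T (k + 1)).1 = (if Even k then 1 else 0) := by
    intro k
    have hspec := (H (T k).1 (T k).2 (if Even k then 1 else 0)).choose_spec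
    exact ⟨hspec.1, hspec.2.2.1, hspec.2.2.2⟩
  have hlen : ∀ k, k < (T k).1.length := by
    intro k
    induction k with
    | zero => simp [hT, chainAux]
    | succ n ih => have := (hstep n).2.1; omega
  have hmono : ∀ a b : ℕ, a ≤ b → (T a).1 <+: (T b).1 := by
    intro a b hab
    induction b with
    | zero => simp_all
    | succ n ih =>
      rcases Nat.lt_or_ge a (n + 1) with h | h
      · exact (ih (by omega)).trans (hstep n).1
      · have : a = n + 1 := by omega
        subst this; exact List.prefix_refl _
  -- the diagonal function
  set f : ℕ → ℕ := fun n => ((T (n + 1)).1).getD n 0 with hf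
  have hfi : ∀ k i (hik : i < (T k).1.length), f i = (T k).1[i]'hik := by
    intro k i hik
    have hi' : i < (T (i + 1)).1.length := hlen (i + 1) |>.trans_le' (by omega)
    rw [hf]; dsimp only
    rw [List.getD_eq_getElem _ _ hi']
    rcases Nat.le_total (i + 1) k with h | h
    · exact (hmono _ _ h).getElem hi'
    · exact ((hmono _ _ h).getElem hik).symm
  have hseg : ∀ k, seg f ((T (k + 1)).1.length - 1) = (T (k + 1)).1 := by
    intro k
    have hpos : 0 < (T (k + 1)).1.length := (hlen (k + 1)).trans_le' (by omega)
    apply List.ext_getElem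
    · simp [seg]; omega
    · intro i hi₁ hi₂
      simp only [seg, List.getElem_ofFn]
      exact hfi (k + 1) i hi₂
  obtain ⟨m, hm⟩ := hG f
  have h1 := hm ((T (2 * (m + 1) + 1)).1.length - 1)
    (by have := hlen (2 * (m + 1) + 1); omega)
  have h2 := hm ((T (2 * (m + 1) + 1 + 1)).1.length - 1)
    (by have := hlen (2 * (m + 1) + 1 + 1); omega)
  rw [hseg, (hstep _).2.2, if_pos (by simp [Nat.even_add_one, parity_simps])] at h1
  rw [hseg, (hstep _).2.2, if_neg (by simp [Nat.even_add_one, parity_simps])] at h2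
  rw [← h2] at h1
  exact absurd h1 (by norm_num)
end

section
/- If S ⊆ ℕ^ℕ is guessable, then S is Δ⁰₂, i.e., both S and its complement are countable intersections of open sets in the product topology on ℕ^ℕ (where ℕ is discrete). -/
open Filter Set
open scoped Classical

lemma isOpen_seg_pred (n : ℕ) (P : List ℕ → Prop) : IsOpen {f : ℕ → ℕ | P (seg f n)} := by
  have hc : Continuous fun f : ℕ → ℕ => (fun i : Fin (n + 1) => f i) :=
    continuous_pi fun i => continuous_apply _
  have he : {f : ℕ → ℕ | P (seg f n)} =
      (fun f : ℕ → ℕ => (fun i : Fin (n + 1) => f i)) ⁻¹' {g | P (List.ofFn g)} := rfl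
  rw [he]
  exact (isOpen_discrete _).preimage hc

lemma gdelta_of_guess (S : Set (ℕ → ℕ)) (G : List ℕ → Fin 2) (hG : Guesses G S) (c : Fin 2)
    (T : Set (ℕ → ℕ)) (hT : ∀ f, f ∈ T ↔ (if f ∈ S then (1 : Fin 2) else 0) = c) :
    ∃ U : ℕ → Set (ℕ → ℕ), (∀ n, IsOpen (U n)) ∧ T = ⋂ n, U n := by
  refine ⟨fun m => ⋃ n, ⋃ (_ : n > m), {f | G (seg f n) = c}, ?_, ?_⟩
  · intro m
    exact isOpen_iUnion fun n => isOpen_iUnion fun _ => isOpen_seg_pred n (fun l => G l = c)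
  · ext f
    simp only [mem_iInter, mem_iUnion, mem_setOf_eq]
    obtain ⟨m₀, hm₀⟩ := hG f
    constructor
    · intro hf m
      refine ⟨max m m₀ + 1, by omega, ?_⟩
      rw [hm₀ _ (by omega), ← (hT f).1 hf]
    · intro hall
      by_contra hf
      obtain ⟨n, hn, hGn⟩ := hall m₀
      have := hm₀ n hn
      rw [hGn] at this
      exact hf ((hT f).2 this.symm)

theorem stmt14 (S : Set (ℕ → ℕ)) (h : Guessable S) :
    (∃ U : ℕ → Set (ℕ → ℕ), (∀ n, IsOpen (U n)) ∧ S = ⋂ n, U n) ∧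
    (∃ V : ℕ → Set (ℕ → ℕ), (∀ n, IsOpen (V n)) ∧ Sᶜ = ⋂ n, V n) := by
  obtain ⟨G, hG⟩ := h
  constructor
  · exact gdelta_of_guess S G hG 1 S (fun f => by by_cases hf : f ∈ S <;> simp [hf])
  · exact gdelta_of_guess S G hG 0 Sᶜ (fun f => by by_cases hf : f ∈ S <;> simp [hf])
end
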